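/- If μ is a continuous (nonatomic) measure on a compact metric space (X, ρ), X is infinite and μ is not a Dirac measure, then the ε-entropy tends to infinity as ε → 0: lim_{ε→0} H_ε(X, ρ, μ) = ∞. -/

import Mathlib

open MeasureTheory

/-- A coupling of `μ₁` and `μ₂`: a probability measure on `X × X` with the
prescribed marginals. -/
def IsCoupling {X : Type*} [MeasurableSpace X]
    (Q : Measure (X × X)) (μ₁ μ₂ : Measure X) : Prop :=
  IsProbabilityMeasure Q ∧ Q.map Prod.fst = μ₁ ∧ Q.map Prod.snd = μ₂

/-- The Kantorovich distance between two measures on a metric space. -/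
noncomputable def kantorovich {X : Type*} [MeasurableSpace X] [MetricSpace X]
    (μ₁ μ₂ : Measure X) : ℝ :=
  sInf {c | ∃ Q : Measure (X × X), IsCoupling Q μ₁ μ₂ ∧ c = ∫ p, dist p.1 p.2 ∂Q}

/-- A discrete (finitely supported) measure. -/
def IsFinitelySupported {X : Type*} [MeasurableSpace X] (lam : Measure X) : Prop :=
  ∃ s : Finset X, lam ((s : Set X)ᶜ) = 0

/-- The Shannon entropy `−Σ λ({x}) log λ({x})` of a discrete measure. -/
noncomputable def shannonEntropy {X : Type*} [MeasurableSpace X] (lam : Measure X) : ℝ :=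
  ∑' x : X, Real.negMulLog ((lam {x}).toReal)

/-- The `ε`-entropy of a metric measure space `(X, ρ, μ)`: the infimum of the Shannon
entropies of discrete measures lying at Kantorovich distance less than `ε` from `μ`. -/
noncomputable def epsEntropy {X : Type*} [MeasurableSpace X] [MetricSpace X]
    (μ : Measure X) (ε : ℝ) : ℝ :=
  sInf {h | ∃ lam : Measure X, IsProbabilityMeasure lam ∧ IsFinitelySupported lam ∧
    kantorovich lam μ < ε ∧ h = shannonEntropy lam}

section Aux
open Metric Filter

lemma kantorovich_bddBelow {X : Type*} [MeasurableSpace X] [MetricSpace X]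
    (μ₁ μ₂ : Measure X) :
    BddBelow {c | ∃ Q : Measure (X × X), IsCoupling Q μ₁ μ₂ ∧ c = ∫ p, dist p.1 p.2 ∂Q} := by
  refine ⟨0, fun c hc => ?_⟩
  obtain ⟨Q, -, rfl⟩ := hc
  exact integral_nonneg fun p => dist_nonneg

/-- Extraction of a near-optimal coupling. -/
lemma exists_coupling_lt {X : Type*} [MeasurableSpace X] [MetricSpace X]
    (lam μ : Measure X) [IsProbabilityMeasure lam] [IsProbabilityMeasure μ]
    {ε : ℝ} (h : kantorovich lam μ < ε) :
    ∃ Q : Measure (X × X), IsCoupling Q lam μ ∧ ∫ p, dist p.1 p.2 ∂Q < ε := by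
  have hne : {c | ∃ Q : Measure (X × X), IsCoupling Q lam μ ∧
      c = ∫ p, dist p.1 p.2 ∂Q}.Nonempty := by
    refine ⟨∫ p, dist p.1 p.2 ∂(lam.prod μ), lam.prod μ, ⟨inferInstance, ?_, ?_⟩, rfl⟩
    · simp [Measure.map_fst_prod]
    · simp [Measure.map_snd_prod]
  obtain ⟨c, ⟨Q, hQ, rfl⟩, hc⟩ := (csInf_lt_iff (kantorovich_bddBelow lam μ) hne).1 h
  exact ⟨Q, hQ, hc⟩

lemma uniform_small_balls {X : Type*} [MetricSpace X] [CompactSpace X]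
    [MeasurableSpace X] [BorelSpace X]
    (μ : Measure X) [IsProbabilityMeasure μ] [NullSingletonClass μ] {c : ℝ} (hc : 0 < c) :
    ∃ r > 0, ∀ x : X, (μ (closedBall x r)).toReal ≤ c := by
  by_contra hcon
  push_neg at hcon
  have key : ∀ r : ℝ, 0 < r → ∃ x : X, c < (μ (closedBall x r)).toReal := by
    intro r hr
    obtain ⟨x, hx⟩ := hcon r hr
    exact ⟨x, hx⟩
  choose u hu using fun n : ℕ => key (1 / (n + 1)) (by positivity)
  obtain ⟨z, -, φ, hφ, hz⟩ := isCompact_univ.tendsto_subseq (fun n => Set.mem_univ (u n))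
  have hball : ∀ s : ℝ, 0 < s → ENNReal.ofReal c ≤ μ (closedBall z s) := by
    intro s hs
    have h1 : Tendsto (fun n => dist (u (φ n)) z) atTop (nhds 0) :=
      tendsto_iff_dist_tendsto_zero.1 hz
    have h2 : Tendsto (fun n : ℕ => 1 / ((φ n : ℝ) + 1)) atTop (nhds 0) := by
      have := (tendsto_one_div_add_atTop_nhds_zero_nat (𝕜 := ℝ)).comp hφ.tendsto_atTop
      exact this
    have h3 : ∀ᶠ n in atTop, dist (u (φ n)) z < s / 2 :=
      (h1.eventually (eventually_lt_nhds (by positivity : (0:ℝ) < s/2)))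
    have h4 : ∀ᶠ n in atTop, (1 : ℝ) / ((φ n : ℝ) + 1) < s / 2 :=
      (h2.eventually (eventually_lt_nhds (by positivity : (0:ℝ) < s/2)))
    obtain ⟨n, hn3, hn4⟩ := (h3.and h4).exists
    have hsub : closedBall (u (φ n)) (1 / ((φ n : ℝ) + 1)) ⊆ closedBall z s := by
      intro w hw
      have : dist w z ≤ dist w (u (φ n)) + dist (u (φ n)) z := dist_triangle _ _ _
      have hw' : dist w (u (φ n)) ≤ 1 / ((φ n : ℝ) + 1) := hw
      simp only [mem_closedBall]
      linarith
    have := (hu (φ n)).le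
    have h5 : ENNReal.ofReal c ≤ μ (closedBall (u (φ n)) (1 / ((φ n : ℝ) + 1))) := by
      rw [← ENNReal.ofReal_toReal (measure_ne_top μ _)]
      exact ENNReal.ofReal_le_ofReal ((hu (φ n)).le)
    exact h5.trans (measure_mono hsub)
  -- intersection of closed balls is the singleton
  have hiInter : (⋂ n : ℕ, closedBall z (1 / ((n : ℝ) + 1))) = {z} := by
    ext w
    simp only [Set.mem_iInter, mem_closedBall, Set.mem_singleton_iff]
    constructor
    · intro h
      have : dist w z ≤ 0 := by
        refine ge_of_tendsto' tendsto_one_div_add_atTop_nhds_zero_nat (fun n => h n)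
      exact dist_le_zero.1 this
    · rintro rfl
      intro n
      simp only [dist_self]
      positivity
  have htend : Tendsto (fun n : ℕ => μ (closedBall z (1 / ((n : ℝ) + 1)))) atTop (nhds (μ {z})) := by
    have := tendsto_measure_iInter_atTop
      (s := fun n : ℕ => closedBall z (1 / ((n : ℝ) + 1)))
      (fun n => measurableSet_closedBall.nullMeasurableSet)
      (fun m n hmn => closedBall_subset_closedBall (by
        have : (m : ℝ) + 1 ≤ (n : ℝ) + 1 := by exact_mod_cast by omega
        exact one_div_le_one_div_of_le (by positivity) this))
      ⟨0, measure_ne_top μ _⟩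
    rwa [hiInter] at this
  have hz0 : μ {z} = 0 := measure_singleton z
  rw [hz0] at htend
  have : ENNReal.ofReal c ≤ 0 :=
    ge_of_tendsto' htend (fun n => hball _ (by positivity))
  simp only [nonpos_iff_eq_zero, ENNReal.ofReal_eq_zero] at this
  linarith

/-- Main lower bound: discrete measures close to a nonatomic measure have large entropy. -/
lemma entropy_lower_bound {X : Type*} [MetricSpace X] [CompactSpace X]
    [MeasurableSpace X] [BorelSpace X]
    (μ : Measure X) [IsProbabilityMeasure μ] [NullSingletonClass μ] (M : ℝ) :
    ∃ ε₀ > 0, ∀ ε : ℝ, 0 < ε → ε < ε₀ → ∀ lam : Measure X, IsProbabilityMeasure lam →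
      IsFinitelySupported lam → kantorovich lam μ < ε → M ≤ shannonEntropy lam := by
  classical
  set M' := max M 1 with hM'
  have hM'pos : (0:ℝ) < M' := lt_of_lt_of_le one_pos (le_max_right _ _)
  set Lc : ℝ := 8 * M' with hLc
  have hLpos : 0 < Lc := by positivity
  set t : ℝ := Real.exp (-Lc) with ht
  have htpos : 0 < t := Real.exp_pos _
  have hc' : (0:ℝ) < Real.exp (-Lc) / 8 := by positivity
  obtain ⟨r, hr, hball⟩ := uniform_small_balls μ hc'
  refine ⟨r / 8, by positivity, ?_⟩
  intro ε hε hεr lam hlamP hlamF hkan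
  haveI := hlamP
  by_contra hH
  push_neg at hH
  have hHM' : shannonEntropy lam ≤ M' := hH.le.trans (le_max_left _ _)
  -- a coupling with small cost
  obtain ⟨Q, hQc, hQint⟩ := exists_coupling_lt lam μ hkan
  haveI hQP : IsProbabilityMeasure Q := hQc.1
  obtain ⟨s, hs⟩ := hlamF
  set p : X → ℝ := fun x => (lam {x}).toReal with hp
  have hp0 : ∀ x, 0 ≤ p x := fun x => ENNReal.toReal_nonneg
  have hp1 : ∀ x, p x ≤ 1 := by
    intro x
    have := prob_le_one (μ := lam) (s := {x})
    simpa [hp] using ENNReal.toReal_mono (by norm_num) this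
  -- entropy as a finite sum
  have hzero : ∀ x ∉ s, Real.negMulLog (p x) = 0 := by
    intro x hx
    have hsub : ({x} : Set X) ⊆ (↑s : Set X)ᶜ := by
      simp [Set.singleton_subset_iff, hx]
    have : lam {x} = 0 := le_antisymm (le_trans (measure_mono hsub) hs.le) zero_le
    simp [hp, this]
  have hHsum : shannonEntropy lam = ∑ x ∈ s, Real.negMulLog (p x) := by
    rw [shannonEntropy]
    exact tsum_eq_sum hzero
  have hnneg : ∀ x ∈ s, 0 ≤ Real.negMulLog (p x) := fun x _ =>
    Real.negMulLog_nonneg (hp0 x) (hp1 x)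
  -- total mass one
  have hsingsum : ∀ u : Finset X, lam ↑u = ∑ x ∈ u, lam {x} := by
    intro u
    rw [← Set.biUnion_of_singleton (↑u : Set X)]
    rw [show (⋃ x ∈ (↑u : Set X), ({x} : Set X)) = ⋃ x ∈ u, ({x} : Set X) by simp,
      measure_biUnion_finset ?_ (fun b _ => measurableSet_singleton b)]
    intro a _ b _ hab
    simp [Set.disjoint_singleton, hab]
  have hmass : ∑ x ∈ s, p x = 1 := by
    have h1 : lam ↑s = 1 := by
      have := measure_add_measure_compl (μ := lam) s.measurableSet
      rw [hs, add_zero, measure_univ] at this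
      exact this
    have := hsingsum s
    rw [h1] at this
    have h2 := congrArg ENNReal.toReal this.symm
    rw [ENNReal.toReal_sum (fun a _ => measure_ne_top _ _)] at h2
    simpa using h2
  set big := s.filter (fun x => t ≤ p x) with hbig
  set small := s.filter (fun x => ¬ t ≤ p x) with hsmall
  -- small atoms carry little mass
  have hsmallmass : (∑ x ∈ small, p x) * Lc ≤ shannonEntropy lam := by
    rw [hHsum, Finset.sum_mul]
    refine le_trans (Finset.sum_le_sum ?_) (Finset.sum_le_sum_of_subset_of_nonneg
      (Finset.filter_subset _ _) (fun x hx _ => hnneg x hx))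
    intro x hx
    obtain ⟨hxs, hxt⟩ := Finset.mem_filter.1 hx
    push_neg at hxt
    rcases eq_or_lt_of_le (hp0 x) with h0 | h0
    · simp [← h0, Real.negMulLog]
    · have hlog : Real.log (p x) ≤ -Lc := by
        calc Real.log (p x) ≤ Real.log t := Real.log_le_log h0 hxt.le
          _ = -Lc := Real.log_exp _
      have : p x * Lc ≤ p x * (-Real.log (p x)) := by nlinarith
      simpa [Real.negMulLog, neg_mul, mul_comm] using this
  have hsmall8 : ∑ x ∈ small, p x ≤ 1 / 8 := by
    have h := hsmallmass.trans hHM'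
    rw [hLc] at h
    rw [div_eq_mul_inv]
    nlinarith [Finset.sum_nonneg (fun x (_ : x ∈ small) => hp0 x)]
  have hbigmass : 7 / 8 ≤ ∑ x ∈ big, p x := by
    have hsplit := Finset.sum_filter_add_sum_filter_not s (fun x => t ≤ p x) p
    rw [hmass] at hsplit
    linarith
  -- cardinality of big
  have hcard : (big.card : ℝ) ≤ Real.exp Lc := by
    have h1 : (big.card : ℝ) * t ≤ ∑ x ∈ big, p x := by
      have := Finset.card_nsmul_le_sum big p t (fun x hx => (Finset.mem_filter.1 hx).2)
      simpa [nsmul_eq_mul] using this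
    have h2 : ∑ x ∈ big, p x ≤ 1 := by
      rw [← hmass]
      exact Finset.sum_le_sum_of_subset_of_nonneg (Finset.filter_subset _ _)
        (fun x _ _ => hp0 x)
    have h3 : (big.card : ℝ) * t ≤ 1 := h1.trans h2
    rw [ht, Real.exp_neg] at h3
    calc (big.card : ℝ) = (big.card : ℝ) * (Real.exp Lc)⁻¹ * Real.exp Lc := by
          field_simp
      _ ≤ 1 * Real.exp Lc := by
          apply mul_le_mul_of_nonneg_right h3 (Real.exp_pos _).le
      _ = Real.exp Lc := one_mul _
  -- the union of balls around big atoms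
  set U : Set X := ⋃ x ∈ big, ball x r with hU
  have hUopen : IsOpen U := isOpen_biUnion (fun x _ => isOpen_ball)
  have hUsmall : (μ U).toReal ≤ 1 / 8 := by
    have h1 : μ U ≤ ∑ x ∈ big, μ (ball x r) := measure_biUnion_finset_le _ _
    have h2 : (μ U).toReal ≤ ∑ x ∈ big, (μ (ball x r)).toReal := by
      rw [← ENNReal.toReal_sum (fun a _ => measure_ne_top _ _)]
      exact ENNReal.toReal_mono (by
        exact (ENNReal.sum_lt_top.2 (fun a _ => measure_lt_top _ _)).ne) h1
    have h3 : ∑ x ∈ big, (μ (ball x r)).toReal ≤ (big.card : ℝ) * (Real.exp (-Lc) / 8) := by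
      have := Finset.sum_le_card_nsmul big (fun x => (μ (ball x r)).toReal)
        (Real.exp (-Lc) / 8) (fun x _ => le_trans (ENNReal.toReal_mono (measure_ne_top _ _)
          (measure_mono ball_subset_closedBall)) (hball x))
      simpa [nsmul_eq_mul] using this
    have h4 : (big.card : ℝ) * (Real.exp (-Lc) / 8) ≤ 1 / 8 := by
      rw [Real.exp_neg]
      calc (big.card : ℝ) * ((Real.exp Lc)⁻¹ / 8) ≤ Real.exp Lc * ((Real.exp Lc)⁻¹ / 8) := by
            apply mul_le_mul_of_nonneg_right hcard (by positivity)
        _ = 1 / 8 := by field_simp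
    linarith
  -- Markov for the coupling cost
  have hdistint : Integrable (fun q : X × X => dist q.1 q.2) Q := by
    refine Integrable.mono' (integrable_const (diam (Set.univ : Set X)))
      ((continuous_fst.dist continuous_snd).aestronglyMeasurable) (ae_of_all _ fun q => ?_)
    rw [Real.norm_eq_abs, abs_of_nonneg dist_nonneg]
    exact dist_le_diam_of_mem isCompact_univ.isBounded (Set.mem_univ _) (Set.mem_univ _)
  have hmarkov : (Q {q : X × X | r ≤ dist q.1 q.2}).toReal < 1 / 8 := by
    have h1 := mul_meas_ge_le_integral_of_nonneg (μ := Q)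
      (f := fun q : X × X => dist q.1 q.2) (ae_of_all _ fun q => dist_nonneg) hdistint r
    have h2 : r * (Q {q : X × X | r ≤ dist q.1 q.2}).toReal < ε := h1.trans_lt hQint
    have h3 : ε < r / 8 := hεr
    nlinarith [ENNReal.toReal_nonneg (a := Q {q : X × X | r ≤ dist q.1 q.2})]
  -- union bound
  have hAsub : (Prod.fst ⁻¹' (↑big : Set X) : Set (X × X)) ⊆
      (Prod.snd ⁻¹' U) ∪ {q : X × X | r ≤ dist q.1 q.2} := by
    rintro ⟨a, b⟩ ha
    by_cases hd : dist a b < r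
    · left
      exact Set.mem_biUnion ha (by simpa [mem_ball, dist_comm] using hd)
    · right
      exact not_lt.1 hd
  have hQA : Q (Prod.fst ⁻¹' (↑big : Set X)) = lam ↑big := by
    rw [← hQc.2.1, Measure.map_apply measurable_fst big.measurableSet]
  have hQB : Q (Prod.snd ⁻¹' U) = μ U := by
    rw [← hQc.2.2, Measure.map_apply measurable_snd hUopen.measurableSet]
  have hchain : lam ↑big ≤ μ U + Q {q : X × X | r ≤ dist q.1 q.2} := by
    rw [← hQA, ← hQB]
    exact le_trans (measure_mono hAsub) (measure_union_le _ _)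
  have hchainR : (lam ↑big).toReal ≤ (μ U).toReal + (Q {q : X × X | r ≤ dist q.1 q.2}).toReal := by
    rw [← ENNReal.toReal_add (measure_ne_top _ _) (measure_ne_top _ _)]
    exact ENNReal.toReal_mono (ENNReal.add_ne_top.2 ⟨measure_ne_top _ _, measure_ne_top _ _⟩)
      hchain
  have hlambig : (lam ↑big).toReal = ∑ x ∈ big, p x := by
    rw [hsingsum big, ENNReal.toReal_sum (fun a _ => measure_ne_top _ _)]
  rw [hlambig] at hchainR
  linarith


open scoped Classical in
noncomputable def netMap {X : Type*} [MetricSpace X] (δ : ℝ) : List X → X → X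
  | [] => id
  | (y :: l) => (Metric.ball y δ).piecewise (fun _ => y) (netMap δ l)

lemma netMap_measurable {X : Type*} [MetricSpace X] [MeasurableSpace X] [BorelSpace X]
    (δ : ℝ) (l : List X) : Measurable (netMap δ l) := by
  induction l with
  | nil => exact measurable_id
  | cons y l ih =>
      classical
      exact Measurable.piecewise measurableSet_ball measurable_const ih

lemma netMap_spec {X : Type*} [MetricSpace X] (δ : ℝ) (l : List X) (x : X)
    (hx : ∃ y ∈ l, x ∈ Metric.ball y δ) :
    netMap δ l x ∈ l ∧ dist (netMap δ l x) x < δ := by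
  classical
  induction l with
  | nil => simp at hx
  | cons y l ih =>
      by_cases h : x ∈ Metric.ball y δ
      · rw [show netMap δ (y :: l) x = y from Set.piecewise_eq_of_mem _ _ _ h]
        exact ⟨List.mem_cons_self, by rw [dist_comm]; exact h⟩
      · rw [show netMap δ (y :: l) x = netMap δ l x from Set.piecewise_eq_of_notMem _ _ _ h]
        obtain ⟨z, hz, hzx⟩ := hx
        rcases List.mem_cons.1 hz with rfl | hz
        · exact absurd hzx h
        · obtain ⟨h1, h2⟩ := ih ⟨z, hz, hzx⟩
          exact ⟨List.mem_cons_of_mem _ h1, h2⟩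


/-- For every `δ > 0` there is a finitely supported probability measure within
Kantorovich distance `δ` (in fact `< δ` is what we prove, via `δ/2`). -/
lemma exists_net_measure {X : Type*} [MetricSpace X] [CompactSpace X]
    [MeasurableSpace X] [BorelSpace X] [Nonempty X]
    (μ : Measure X) [IsProbabilityMeasure μ] {ε : ℝ} (hε : 0 < ε) :
    ∃ lam : Measure X, IsProbabilityMeasure lam ∧ IsFinitelySupported lam ∧
      kantorovich lam μ < ε := by
  classical
  set δ := ε / 2 with hδ
  have hδpos : 0 < δ := by positivity
  -- finite subcover
  obtain ⟨t, ht⟩ := isCompact_univ.elim_finite_subcover (fun y : X => Metric.ball y δ)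
    (fun y => isOpen_ball) (fun x _ => Set.mem_iUnion.2 ⟨x, mem_ball_self hδpos⟩)
  set l := t.toList with hl
  set f := netMap δ l with hf
  have hfm : Measurable f := netMap_measurable δ l
  have hcov : ∀ x : X, f x ∈ l ∧ dist (f x) x < δ := by
    intro x
    refine netMap_spec δ l x ?_
    have := ht (Set.mem_univ x)
    simp only [Set.mem_iUnion, exists_prop] at this
    obtain ⟨y, hy, hxy⟩ := this
    exact ⟨y, by simpa [hl] using hy, hxy⟩
  set lam := μ.map f with hlam
  have hprob : IsProbabilityMeasure lam := Measure.isProbabilityMeasure_map hfm.aemeasurable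
  have hfs : IsFinitelySupported lam := by
    refine ⟨t, ?_⟩
    rw [hlam, Measure.map_apply hfm (t.measurableSet.compl)]
    have : f ⁻¹' ((t : Set X))ᶜ = ∅ := by
      ext x
      simp only [Set.mem_preimage, Set.mem_compl_iff, Set.mem_empty_iff_false, iff_false,
        not_not]
      exact Finset.mem_coe.2 (Finset.mem_toList.1 (hcov x).1)
    rw [this, measure_empty]
  refine ⟨lam, hprob, hfs, ?_⟩
  -- the coupling
  set g : X → X × X := fun x => (f x, x) with hg
  have hgm : Measurable g := hfm.prodMk measurable_id
  set Q := μ.map g with hQ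
  have hQprob : IsProbabilityMeasure Q := Measure.isProbabilityMeasure_map hgm.aemeasurable
  have hQ1 : Q.map Prod.fst = lam := by
    rw [hQ, Measure.map_map measurable_fst hgm]; rfl
  have hQ2 : Q.map Prod.snd = μ := by
    rw [hQ, Measure.map_map measurable_snd hgm]
    exact Measure.map_id
  have hint : ∫ p, dist p.1 p.2 ∂Q = ∫ x, dist (f x) x ∂μ := by
    rw [hQ, integral_map hgm.aemeasurable]
    exact (continuous_fst.dist continuous_snd).aestronglyMeasurable
  have hintle : ∫ x, dist (f x) x ∂μ ≤ δ := by
    have hfi : Integrable (fun x => dist (f x) x) μ := by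
      refine Integrable.mono' (integrable_const δ) ((hfm.dist measurable_id).aestronglyMeasurable)
        (ae_of_all _ fun x => ?_)
      rw [Real.norm_eq_abs, abs_of_nonneg dist_nonneg]
      exact (hcov x).2.le
    calc ∫ x, dist (f x) x ∂μ ≤ ∫ _x, δ ∂μ :=
          integral_mono hfi (integrable_const δ) (fun x => (hcov x).2.le)
      _ = δ := by simp
  have hk : kantorovich lam μ ≤ δ := by
    have hmem : (∫ p, dist p.1 p.2 ∂Q) ∈
        {c | ∃ Q' : Measure (X × X), IsCoupling Q' lam μ ∧ c = ∫ p, dist p.1 p.2 ∂Q'} :=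
      ⟨Q, ⟨hQprob, hQ1, hQ2⟩, rfl⟩
    have h := csInf_le (kantorovich_bddBelow lam μ) hmem
    rw [hint] at h
    exact h.trans hintle
  linarith


end Aux

/-- If `μ` is a nonatomic Borel probability measure (not a Dirac measure) on an infinite
compact metric space, then the `ε`-entropy tends to infinity as `ε → 0⁺`. -/
theorem epsEntropy_tendsto_top_of_nonatomic {X : Type*} [MetricSpace X] [CompactSpace X]
    [MeasurableSpace X] [BorelSpace X] [Infinite X]
    (μ : Measure X) [IsProbabilityMeasure μ] [NullSingletonClass μ]
    (hnotdirac : ∀ x : X, μ ≠ Measure.dirac x) :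
    Filter.Tendsto (fun ε => epsEntropy μ ε) (nhdsWithin 0 (Set.Ioi (0 : ℝ)))
      Filter.atTop := by
  haveI : Nonempty X := inferInstance
  rw [Filter.tendsto_atTop]
  intro M
  obtain ⟨ε₀, hε₀, hlow⟩ := entropy_lower_bound μ M
  filter_upwards [Ioo_mem_nhdsGT_of_mem (⟨le_refl 0, hε₀⟩ : (0:ℝ) ∈ Set.Ico 0 ε₀)] with ε hε
  rw [epsEntropy]
  refine le_csInf ?_ ?_
  · obtain ⟨lam, h1, h2, h3⟩ := exists_net_measure μ hε.1
    exact ⟨shannonEntropy lam, lam, h1, h2, h3, rfl⟩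
  · rintro h ⟨lam, h1, h2, h3, rfl⟩
    exact hlow ε hε.1 hε.2 lam h1 h2 h3
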